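/- Let A = {0, a, b, c} with the multiplication given by: 0·u = u·0 = 0 for all u; a·a = a·b = a·c = a; b·a = a, b·b = b, b·c = c; c·a = c·b = c·c = c. Then: (1) the operation · on A is associative and idempotent (so A lies in the variety defined by (x·y)·z ≈ x·(y·z), x·x ≈ x, x·0 ≈ 0·x ≈ 0); (2) π̃(a,b,a,b) and π̃(c,c,a,b) hold in A, where π̃(x,y,z,w) denotes the condition: for all u ∈ A, (z·u = w·u implies x·u = y·u) and (u·z = u·w implies u·x = u·y); (3) π̃(a·c, b·c, a, b) fails in A (indeed a·a = b·a but (a·c)·a ≠ (b·c)·a); (4) consequently, there is no family S of congruences of A (equivalence relations on A compatible with ·) such that for all x,y,z,w ∈ A: π̃(x,y,z,w) holds if and only if for every θ ∈ S, (z,w) ∈ θ implies (x,y) ∈ θ. -/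
import Mathlib


/-- The four-element counterexample algebra `{0, a, b, c}`. -/
inductive A4 : Type
  | e0 | ea | eb | ec
deriving DecidableEq

open A4

/-- The multiplication table: `0·u = u·0 = 0`; `a·a = a·b = a·c = a`;
`b·a = a`, `b·b = b`, `b·c = c`; `c·a = c·b = c·c = c`. -/
def m4 : A4 → A4 → A4
  | e0, _ => e0
  | _, e0 => e0
  | ea, _ => ea
  | eb, ea => ea
  | eb, eb => eb
  | eb, ec => ec
  | ec, _ => ec

/-- The simplified formula `π̃(x,y,z,w)` obtained from the Mal'cev terms for
this variety. -/
def piTilde (x y z w : A4) : Prop :=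
  ∀ u, (m4 z u = m4 w u → m4 x u = m4 y u) ∧ (m4 u z = m4 u w → m4 u x = m4 u y)

/-- A congruence of `(A4, m4)`. -/
def IsCon4 (r : A4 → A4 → Prop) : Prop :=
  Equivalence r ∧ ∀ x y x' y', r x y → r x' y' → r (m4 x x') (m4 y y')

instance : Fintype A4 := ⟨{e0, ea, eb, ec}, by intro x; cases x <;> simp⟩

instance (x y z w : A4) : Decidable (piTilde x y z w) := by
  unfold piTilde; infer_instance

/-- The counterexample: (1) `A4` lies in the variety defined by associativity,
idempotence and `x·0 ≈ 0·x ≈ 0`; (2) `π̃(a,b,a,b)` and `π̃(c,c,a,b)` hold;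
(3) `π̃(a·c, b·c, a, b)` fails (indeed `a·a = b·a` but `(a·c)·a ≠ (b·c)·a`);
(4) hence `π̃` is not of the form `∀ θ ∈ S, (z,w) ∈ θ → (x,y) ∈ θ` for any
family `S` of congruences of `A4`. -/
theorem statement19 :
    ((∀ x y z, m4 (m4 x y) z = m4 x (m4 y z)) ∧ (∀ x, m4 x x = x) ∧
      (∀ u, m4 e0 u = e0 ∧ m4 u e0 = e0)) ∧
    (piTilde ea eb ea eb ∧ piTilde ec ec ea eb) ∧
    (¬ piTilde (m4 ea ec) (m4 eb ec) ea eb ∧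
      m4 ea ea = m4 eb ea ∧ m4 (m4 ea ec) ea ≠ m4 (m4 eb ec) ea) ∧
    ¬ ∃ S : Set (A4 → A4 → Prop),
        (∀ r ∈ S, IsCon4 r) ∧
        (∀ x y z w, piTilde x y z w ↔ ∀ r ∈ S, r z w → r x y) := by
  refine ⟨by decide, ⟨by decide, by decide⟩, ⟨by decide, by decide, by decide⟩, ?_⟩
  rintro ⟨S, hS, hiff⟩
  have h1 : piTilde ea eb ea eb := by decide
  have h2 : piTilde (m4 ea ec) (m4 eb ec) ea eb := by
    refine (hiff _ _ _ _).mpr fun r hr hab => ?_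
    exact (hS r hr).2 _ _ _ _ hab ((hS r hr).1.refl ec)
  exact (by decide : ¬ piTilde (m4 ea ec) (m4 eb ec) ea eb) h2
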